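/- arXiv:1410.7009 — 6 statements merged into one kernel-verified Lean document; each statement's English description precedes it below -/
import Mathlib

section
/- Let n ≥ 1 and let g : ℝ → ℝ^n be a function that is analytic (expandable in Taylor series) in a neighborhood of 0. For each j ≥ 0 let P_j be the shifted Legendre polynomial of degree j on [0,1], i.e., a polynomial of exact degree j satisfying ∫₀¹ P_i(x) P_j(x) dx = δ_{ij}. Then for every j ≥ 0 the vector γ_j(h) = ∫₀¹ g(τh) P_j(τ) dτ satisfies γ_j(h) = O(h^j) as h → 0⁺; that is, there exist constants C > 0 and h₀ > 0 such that ‖γ_j(h)‖ ≤ C h^j for all 0 < h ≤ h₀. -/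
open Polynomial intervalIntegral

private lemma poly_int (p q : Polynomial ℝ) :
    IntervalIntegrable (fun x => p.eval x * q.eval x) MeasureTheory.volume 0 1 :=
  (p.continuous.mul q.continuous).intervalIntegrable _ _

/-- P j is orthogonal to all polynomials of degree < j. -/
private lemma ortho (P : ℕ → Polynomial ℝ)
    (hdeg : ∀ j, (P j).degree = j)
    (horth : ∀ i j, (∫ x in (0:ℝ)..1, (P i).eval x * (P j).eval x)
      = if i = j then 1 else 0) (j : ℕ) :
    ∀ m : ℕ, ∀ q : Polynomial ℝ, q.degree < (j : WithBot ℕ) → q.degree < (m : WithBot ℕ) →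
      (∫ x in (0:ℝ)..1, (P j).eval x * q.eval x) = 0 := by
  intro m
  induction m with
  | zero =>
    intro q hqj hq0
    have : q = 0 := by
      rw [← Polynomial.degree_eq_bot]
      exact Nat.WithBot.lt_zero_iff.mp (by exact_mod_cast hq0)
    simp [this]
  | succ m IH =>
    intro q hqj hqm
    by_cases hq : q = 0
    · simp [hq]
    · set d := q.natDegree with hd
      have hdq : q.degree = (d : WithBot ℕ) := Polynomial.degree_eq_natDegree hq
      have hdj : d < j := by exact_mod_cast hdq ▸ hqj
      have hPd0 : P d ≠ 0 := by
        intro h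
        have := hdeg d
        rw [h, Polynomial.degree_zero] at this
        exact absurd this (by simp)
      have hlc : (P d).leadingCoeff ≠ 0 := Polynomial.leadingCoeff_ne_zero.mpr hPd0
      set c : ℝ := q.leadingCoeff / (P d).leadingCoeff with hc
      have hc0 : c ≠ 0 := div_ne_zero (Polynomial.leadingCoeff_ne_zero.mpr hq) hlc
      set q' : Polynomial ℝ := q - Polynomial.C c * P d with hq'
      have hdegCP : (Polynomial.C c * P d).degree = q.degree := by
        rw [Polynomial.degree_C_mul hc0, hdeg d, hdq]
      have hlcCP : q.leadingCoeff = (Polynomial.C c * P d).leadingCoeff := by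
        rw [Polynomial.leadingCoeff_mul, Polynomial.leadingCoeff_C, hc,
          div_mul_cancel₀ _ hlc]
      have hq'lt : q'.degree < q.degree := Polynomial.degree_sub_lt hdegCP.symm hq hlcCP
      have hq'j : q'.degree < (j : WithBot ℕ) := lt_trans hq'lt hqj
      have hq'm : q'.degree < (m : WithBot ℕ) := by
        have h1 : q'.degree < (d : WithBot ℕ) := hdq ▸ hq'lt
        have h2 : (d : WithBot ℕ) ≤ (m : WithBot ℕ) := by
          have : (d : WithBot ℕ) < ((m+1 : ℕ) : WithBot ℕ) := hdq ▸ hqm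
          exact_mod_cast Nat.lt_succ_iff.mp (by exact_mod_cast this)
        exact lt_of_lt_of_le h1 h2
      have hsplit : ∀ x : ℝ, (P j).eval x * q.eval x
          = c * ((P j).eval x * (P d).eval x) + (P j).eval x * q'.eval x := by
        intro x
        simp only [hq', Polynomial.eval_sub, Polynomial.eval_mul, Polynomial.eval_C]
        ring
      rw [intervalIntegral.integral_congr (g := fun x =>
          c * ((P j).eval x * (P d).eval x) + (P j).eval x * q'.eval x)
          (fun x _ => hsplit x)]
      rw [intervalIntegral.integral_add
          ((poly_int (P j) (P d)).const_mul c) (poly_int (P j) q'),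
        intervalIntegral.integral_const_mul, horth j d, IH q' hq'j hq'm]
      simp [Nat.ne_of_gt hdj]

/-- if `g` is analytic at `0` and `P j` are the shifted Legendre polynomials on
`[0,1]`, then the Fourier–Legendre coefficients `γ_j(h) = ∫₀¹ g(τh) P_j(τ) dτ` satisfy
`γ_j(h) = O(h^j)` as `h → 0⁺`. -/
theorem stmt_4 (n : ℕ) (hn : 1 ≤ n)
    (g : ℝ → EuclideanSpace ℝ (Fin n)) (hg : AnalyticAt ℝ g 0)
    (P : ℕ → Polynomial ℝ)
    (hdeg : ∀ j, (P j).degree = j)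
    (horth : ∀ i j, (∫ x in (0:ℝ)..1, (P i).eval x * (P j).eval x)
      = if i = j then 1 else 0) :
    ∀ j : ℕ, ∃ C > 0, ∃ h₀ > 0, ∀ h : ℝ, 0 < h → h ≤ h₀ →
      ‖∫ τ in (0:ℝ)..1, (P j).eval τ • g (τ * h)‖ ≤ C * h ^ j := by
  intro j
  obtain ⟨p, hp⟩ := hg
  -- Taylor remainder bound
  have hO := hp.isBigO_sub_partialSum_pow j
  rw [Asymptotics.isBigO_iff] at hO
  obtain ⟨c, hc⟩ := hO
  rw [Metric.eventually_nhds_iff] at hc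
  obtain ⟨ε, hε, hcb⟩ := hc
  -- analyticity (hence continuity) near 0
  have han' := (hp.analyticAt).eventually_analyticAt
  rw [Metric.eventually_nhds_iff] at han'
  obtain ⟨ε₂, hε₂, han⟩ := han'
  -- bound on P j on [0,1]
  obtain ⟨M, hM⟩ := (isCompact_Icc : IsCompact (Set.Icc (0:ℝ) 1)).exists_bound_of_continuousOn
    (fun x _ => ((P j).continuous.continuousAt).continuousWithinAt)
  refine ⟨(|M| + 1) * (|c| + 1), by positivity, min (ε/2) (ε₂/2), by positivity, ?_⟩
  intro h hh hh0
  have hhε : h < ε := lt_of_le_of_lt (hh0.trans (min_le_left _ _)) (by linarith)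
  have hhε₂ : h < ε₂ := lt_of_le_of_lt (hh0.trans (min_le_right _ _)) (by linarith)
  set S : ℝ → EuclideanSpace ℝ (Fin n) := fun y => p.partialSum j y with hS
  -- continuity of τ ↦ g (τ * h) on [0,1]
  have contg : ContinuousOn (fun τ : ℝ => g (τ * h)) (Set.uIcc (0:ℝ) 1) := by
    intro τ hτ
    rw [Set.uIcc_of_le (by norm_num : (0:ℝ) ≤ 1)] at hτ
    have hdist : dist (τ * h) 0 < ε₂ := by
      rw [Real.dist_eq, sub_zero, abs_of_nonneg (mul_nonneg hτ.1 hh.le)]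
      calc τ * h ≤ 1 * h := by nlinarith [hτ.2, hh.le]
        _ < ε₂ := by linarith
    have hca : ContinuousAt (fun τ : ℝ => g (τ * h)) τ :=
      ContinuousAt.comp (han hdist).continuousAt ((continuous_mul_right h).continuousAt)
    exact hca.continuousWithinAt
  have contP : ContinuousOn (fun τ : ℝ => (P j).eval τ) (Set.uIcc (0:ℝ) 1) :=
    (P j).continuous.continuousOn
  have int1 : IntervalIntegrable (fun τ => (P j).eval τ • g (τ * h))
      MeasureTheory.volume 0 1 := (contP.smul contg).intervalIntegrable
  have int2 : IntervalIntegrable (fun τ => (P j).eval τ • S (τ * h))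
      MeasureTheory.volume 0 1 :=
    (contP.smul ((p.partialSum_continuous j).comp (continuous_mul_right h)).continuousOn).intervalIntegrable
  -- the partial-sum integral vanishes
  have hSval : ∀ y : ℝ, S y = ∑ k ∈ Finset.range j, y ^ k • (p k fun _ => (1:ℝ)) := by
    intro y
    rw [hS]
    unfold FormalMultilinearSeries.partialSum
    refine Finset.sum_congr rfl fun k _ => ?_
    have : (fun _ : Fin k => y) = fun i : Fin k => (fun _ : Fin k => y) i • (fun _ : Fin k => (1:ℝ)) i := by
      funext i; simp
    rw [this, (p k).map_smul_univ]
    simp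
  have hzero : (∫ τ in (0:ℝ)..1, (P j).eval τ • S (τ * h)) = 0 := by
    have heq : ∀ τ : ℝ, (P j).eval τ • S (τ * h)
        = ∑ k ∈ Finset.range j, ((P j).eval τ * (τ * h) ^ k) • (p k fun _ => (1:ℝ)) := by
      intro τ
      rw [hSval (τ * h), Finset.smul_sum]
      refine Finset.sum_congr rfl fun k _ => ?_
      rw [smul_smul]
    rw [intervalIntegral.integral_congr (fun τ _ => heq τ)]
    rw [intervalIntegral.integral_finset_sum]
    · refine Finset.sum_eq_zero fun k hk => ?_
      rw [intervalIntegral.integral_smul_const]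
      have : (∫ τ in (0:ℝ)..1, (P j).eval τ * (τ * h) ^ k)
          = h ^ k * ∫ τ in (0:ℝ)..1, (P j).eval τ * (Polynomial.X ^ k : Polynomial ℝ).eval τ := by
        rw [← intervalIntegral.integral_const_mul]
        refine intervalIntegral.integral_congr fun τ _ => ?_
        simp [mul_pow]; ring
      rw [this, ortho P hdeg horth j j (Polynomial.X ^ k)
          (by simpa using (Nat.cast_lt (α := WithBot ℕ)).mpr (Finset.mem_range.mp hk))
          (by simpa using (Nat.cast_lt (α := WithBot ℕ)).mpr (Finset.mem_range.mp hk))]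
      simp
    · intro k _
      exact (((P j).continuous.mul ((continuous_mul_right h).pow k)).smul
        continuous_const).intervalIntegrable _ _
  -- split the integral
  have hsplit : (∫ τ in (0:ℝ)..1, (P j).eval τ • g (τ * h))
      = ∫ τ in (0:ℝ)..1, (P j).eval τ • (g (τ * h) - S (τ * h)) := by
    have : ∀ τ : ℝ, (P j).eval τ • (g (τ * h) - S (τ * h))
        = (P j).eval τ • g (τ * h) - (P j).eval τ • S (τ * h) := fun τ => smul_sub _ _ _
    rw [intervalIntegral.integral_congr (fun τ _ => this τ),
      intervalIntegral.integral_sub int1 int2, hzero, sub_zero]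
  rw [hsplit]
  -- bound the remainder integral
  have hbound : ∀ τ ∈ Set.uIoc (0:ℝ) 1,
      ‖(P j).eval τ • (g (τ * h) - S (τ * h))‖ ≤ (|M| + 1) * ((|c| + 1) * h ^ j) := by
    intro τ hτ
    rw [Set.uIoc_of_le (by norm_num : (0:ℝ) ≤ 1)] at hτ
    have hτ0 : 0 ≤ τ := hτ.1.le
    have hτ1 : τ ≤ 1 := hτ.2
    have hdist : dist (τ * h) 0 < ε := by
      rw [Real.dist_eq, sub_zero, abs_of_nonneg (mul_nonneg hτ0 hh.le)]
      nlinarith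
    have hrem := hcb hdist
    rw [zero_add] at hrem
    have hnorm : ‖‖τ * h‖ ^ j‖ = (τ * h) ^ j := by
      rw [Real.norm_eq_abs, Real.norm_eq_abs, abs_of_nonneg (mul_nonneg hτ0 hh.le),
        abs_of_nonneg (pow_nonneg (mul_nonneg hτ0 hh.le) j)]
    rw [hnorm] at hrem
    have hpow : (τ * h) ^ j ≤ h ^ j := by
      apply pow_le_pow_left₀ (mul_nonneg hτ0 hh.le)
      nlinarith
    have h1 : ‖g (τ * h) - S (τ * h)‖ ≤ (|c| + 1) * h ^ j := by
      calc ‖g (τ * h) - S (τ * h)‖ ≤ c * (τ * h) ^ j := hrem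
        _ ≤ (|c| + 1) * (τ * h) ^ j := by
          have hc1 : c ≤ |c| + 1 := by
            have := le_abs_self c; linarith
          exact mul_le_mul_of_nonneg_right hc1 (pow_nonneg (mul_nonneg hτ0 hh.le) j)
        _ ≤ (|c| + 1) * h ^ j := by
          apply mul_le_mul_of_nonneg_left hpow (by positivity)
    have h2 : ‖(P j).eval τ‖ ≤ |M| + 1 := by
      have := hM τ ⟨hτ0, hτ1⟩
      have := le_abs_self M
      linarith
    calc ‖(P j).eval τ • (g (τ * h) - S (τ * h))‖
        = ‖(P j).eval τ‖ * ‖g (τ * h) - S (τ * h)‖ := norm_smul _ _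
      _ ≤ (|M| + 1) * ((|c| + 1) * h ^ j) := by
          apply mul_le_mul h2 h1 (norm_nonneg _) (by positivity)
  calc ‖∫ τ in (0:ℝ)..1, (P j).eval τ • (g (τ * h) - S (τ * h))‖
      ≤ (|M| + 1) * ((|c| + 1) * h ^ j) * |1 - 0| :=
        intervalIntegral.norm_integral_le_of_norm_le_const hbound
    _ = (|M| + 1) * (|c| + 1) * h ^ j := by rw [sub_zero, abs_one, mul_one]; ring
end

section
/- Let n ≥ 1, s ≥ 1, let H : ℝ^n → ℝ be continuously differentiable, let J ∈ ℝ^{n×n} be a skew-symmetric matrix, and let {P_j}_{j=0}^{s−1} be the shifted Legendre polynomials on [0,1] (deg P_j = j, ∫₀¹ P_i P_j = δ_{ij}). Let h > 0 and let σ : [0,h] → ℝ^n be a polynomial of degree at most s satisfying σ'(ch) = Σ_{j=0}^{s−1} γ_j P_j(c) for all c ∈ [0,1], where γ_j = ∫₀¹ J ∇H(σ(τh)) P_j(τ) dτ. Then H(σ(h)) = H(σ(0)). -/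
/-! Along `σ`, the chain rule gives `d/dc H(σ(ch)) = h Σⱼ Pⱼ(c) ∇H(σ(ch)) ⬝ γⱼ`. Integrating over
`[0, 1]` and pulling the constant vectors `γⱼ` out of the integral turns the energy increment into
`h Σⱼ gⱼ ⬝ J gⱼ`, where `gⱼ = ∫₀¹ Pⱼ(τ) ∇H(σ(τh)) dτ` and `γⱼ = J gⱼ`; every term vanishes because
`J` is skew-symmetric. -/
open Matrix Set MeasureTheory

theorem Matrix.dotProduct_mulVec_self_eq_zero_of_transpose_eq_neg
    {m R : Type*} [Fintype m] [CommRing R] [NoZeroDivisors R] [CharZero R]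
    {J : Matrix m m R} (hJ : Jᵀ = -J) (x : m → R) : x ⬝ᵥ J *ᵥ x = 0 := by
  rw [← CharZero.eq_neg_self_iff]
  calc x ⬝ᵥ J *ᵥ x = Jᵀ *ᵥ x ⬝ᵥ x := by rw [dotProduct_mulVec, mulVec_transpose]
    _ = -(x ⬝ᵥ J *ᵥ x) := by rw [hJ, neg_mulVec, neg_dotProduct, dotProduct_comm]

theorem intervalIntegral.integral_dotProduct_const {m : Type*} [Fintype m] {f : ℝ → m → ℝ}
    {a b : ℝ} (hf : IntervalIntegrable f volume a b) (w : m → ℝ) :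
    ∫ c in a..b, f c ⬝ᵥ w = (∫ c in a..b, f c) ⬝ᵥ w :=
  ((dotProductBilin ℝ ℝ).flip w).toContinuousLinearMap.intervalIntegral_comp_comm hf

theorem intervalIntegral.integral_mulVec {m : Type*} [Fintype m] {f : ℝ → m → ℝ}
    {a b : ℝ} (hf : IntervalIntegrable f volume a b) (J : Matrix m m ℝ) :
    ∫ c in a..b, J *ᵥ f c = J *ᵥ ∫ c in a..b, f c :=
  J.mulVecLin.toContinuousLinearMap.intervalIntegral_comp_comm hf

theorem integral_sum_mul_dotProduct_mulVec_integral_eq_zero {m ι : Type*} [Fintype m]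
    {J : Matrix m m ℝ} (hJ : Jᵀ = -J) (S : Finset ι) {p : ι → ℝ → ℝ} {v : ℝ → m → ℝ}
    {a b : ℝ} (hp : ∀ j, ContinuousOn (p j) (uIcc a b)) (hv : ContinuousOn v (uIcc a b)) :
    ∫ c in a..b, ∑ j ∈ S, p j c * (v c ⬝ᵥ J *ᵥ ∫ τ in a..b, p j τ • v τ) = 0 := by
  rw [intervalIntegral.integral_finsetSum fun j _ =>
    ContinuousOn.intervalIntegrable (by have := hp j; fun_prop)]
  refine Finset.sum_eq_zero fun j _ => ?_
  simp_rw [← smul_eq_mul, ← smul_dotProduct]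
  rw [intervalIntegral.integral_dotProduct_const
      (ContinuousOn.intervalIntegrable (by have := hp j; fun_prop)),
    dotProduct_mulVec_self_eq_zero_of_transpose_eq_neg hJ]

theorem continuous_of_fderiv_eq_dotProduct {m : Type*} [Fintype m] {H : (m → ℝ) → ℝ}
    {g : (m → ℝ) → m → ℝ} (hH : ContDiff ℝ 1 H) (hg : ∀ y w, fderiv ℝ H y w = g y ⬝ᵥ w) :
    Continuous g := by
  classical
  refine continuous_pi fun i => ?_
  have hgi : (fun y => g y i) = fun y => fderiv ℝ H y (Pi.single i 1) := by
    simp [hg, dotProduct_single]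
  rw [hgi]
  exact (hH.continuous_fderiv one_ne_zero).clm_apply continuous_const

theorem hasDerivAt_comp_mul_const_of_fderiv_eq_dotProduct {m : Type*} [Fintype m]
    {H : (m → ℝ) → ℝ} {σ : ℝ → m → ℝ} {g σ' : m → ℝ} {c h : ℝ}
    (hH : DifferentiableAt ℝ H (σ (c * h))) (hg : ∀ w, fderiv ℝ H (σ (c * h)) w = g ⬝ᵥ w)
    (hσ : HasDerivAt σ σ' (c * h)) :
    HasDerivAt (fun c => H (σ (c * h))) (h * (g ⬝ᵥ σ')) c := by
  have hσh : HasDerivAt (fun c => σ (c * h)) (h • σ') c :=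
    hσ.scomp c (by simpa using (hasDerivAt_id c).mul_const h)
  refine (hH.hasFDerivAt.comp_hasDerivAt c hσh).congr_deriv ?_
  rw [map_smul, hg, smul_eq_mul]

theorem stmt_5_general (n s : ℕ)
    (H : (Fin n → ℝ) → ℝ) (hH : ContDiff ℝ 1 H)
    (gradH : (Fin n → ℝ) → Fin n → ℝ)
    (hgrad : ∀ y w, fderiv ℝ H y w = ∑ i, gradH y i * w i)
    (J : Matrix (Fin n) (Fin n) ℝ) (hJ : J.transpose = -J)
    (P : ℕ → Polynomial ℝ)
    (h : ℝ)
    (σ : ℝ → Fin n → ℝ)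
    (γ : ℕ → Fin n → ℝ)
    (hγ : ∀ j, γ j = ∫ τ in (0:ℝ)..1, (P j).eval τ • J.mulVec (gradH (σ (τ * h))))
    (hσ' : ∀ c ∈ Set.Icc (0:ℝ) 1,
      HasDerivAt σ (∑ j ∈ Finset.range s, (P j).eval c • γ j) (c * h)) :
    H (σ h) = H (σ 0) := by
  set v : ℝ → Fin n → ℝ := fun c => gradH (σ (c * h))
  have hv : ContinuousOn v (uIcc 0 1) := by
    rw [uIcc_of_le zero_le_one]
    exact (continuous_of_fderiv_eq_dotProduct hH hgrad).comp_continuousOn <|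
      continuousOn_of_forall_continuousAt fun c hc =>
        (hσ' c hc).continuousAt.comp (f := fun c => c * h) (by fun_prop)
  have hPv : ∀ j, IntervalIntegrable (fun τ => (P j).eval τ • v τ) volume 0 1 := fun j =>
    ContinuousOn.intervalIntegrable (by fun_prop)
  have hγJ : ∀ j, γ j = J *ᵥ ∫ τ in (0:ℝ)..1, (P j).eval τ • v τ := fun j => by
    rw [hγ, ← intervalIntegral.integral_mulVec (hPv j)]
    simp only [mulVec_smul, v]
  have hderiv : ∀ c ∈ uIcc (0:ℝ) 1, HasDerivAt (fun c => H (σ (c * h)))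
      (h * ∑ j ∈ Finset.range s, (P j).eval c * (v c ⬝ᵥ γ j)) c := by
    intro c hc
    rw [uIcc_of_le zero_le_one] at hc
    simpa only [dotProduct_sum, dotProduct_smul, smul_eq_mul] using
      hasDerivAt_comp_mul_const_of_fderiv_eq_dotProduct
        ((hH.differentiable one_ne_zero) _) (hgrad _) (hσ' c hc)
  have hFTC := intervalIntegral.integral_eq_sub_of_hasDerivAt hderiv
    (ContinuousOn.intervalIntegrable (by fun_prop))
  simp_rw [intervalIntegral.integral_const_mul, hγJ,
    integral_sum_mul_dotProduct_mulVec_integral_eq_zero (p := fun j c => (P j).eval c) hJ _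
      (fun j => (P j).continuous.continuousOn) hv,
    mul_zero, one_mul, zero_mul] at hFTC
  linarith

/-- energy conservation for the continuous-stage HBVM polynomial: if `σ` is a
polynomial of degree ≤ s with `σ'(ch) = Σ_{j<s} γ_j P_j(c)`, where
`γ_j = ∫₀¹ J ∇H(σ(τh)) P_j(τ) dτ` and `J` is skew-symmetric, then `H(σ(h)) = H(σ(0))`. -/
theorem stmt_5 (n s : ℕ) (hn : 1 ≤ n) (hs : 1 ≤ s)
    (H : (Fin n → ℝ) → ℝ) (hH : ContDiff ℝ 1 H)
    (gradH : (Fin n → ℝ) → Fin n → ℝ)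
    (hgrad : ∀ y w, fderiv ℝ H y w = ∑ i, gradH y i * w i)
    (J : Matrix (Fin n) (Fin n) ℝ) (hJ : J.transpose = -J)
    (P : ℕ → Polynomial ℝ)
    (hdeg : ∀ j, (P j).degree = j)
    (horth : ∀ i j, (∫ x in (0:ℝ)..1, (P i).eval x * (P j).eval x)
      = if i = j then 1 else 0)
    (h : ℝ) (hh : 0 < h)
    (σ : ℝ → Fin n → ℝ)
    (hσpoly : ∀ i, ∃ Q : Polynomial ℝ, Q.natDegree ≤ s ∧ ∀ t, σ t i = Q.eval t)
    (γ : ℕ → Fin n → ℝ)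
    (hγ : ∀ j, γ j = ∫ τ in (0:ℝ)..1, (P j).eval τ • J.mulVec (gradH (σ (τ * h))))
    (hσ' : ∀ c ∈ Set.Icc (0:ℝ) 1,
      HasDerivAt σ (∑ j ∈ Finset.range s, (P j).eval c • γ j) (c * h)) :
    H (σ h) = H (σ 0) :=
  stmt_5_general n s H hH gradH hgrad J hJ P h σ γ hγ hσ'
end

section
/- Under the setting of the Hamiltonian error identity — u a polynomial of degree at most s with u'(ch) = Σ_{j=0}^{s−1} (γ_j − Δ_j(h)) P_j(c), γ_j = ∫₀¹ J ∇H(u(τh)) P_j(τ) dτ, J skew-symmetric, H C¹ — suppose in addition that there are constants C₁, C₂ > 0 and h₀ > 0 and an integer k ≥ s such that for all 0 < h ≤ h₀ and 0 ≤ j ≤ s−1, ‖a_j(h)‖ ≤ C₁ h^j (where a_j = ∫₀¹ ∇H(u(τh)) P_j(τ) dτ) and ‖Δ_j(h)‖ ≤ C₂ h^{2k−j}. Then there is a constant C > 0 such that |H(u(h)) − H(u(0))| ≤ C h^{2k+1} for all 0 < h ≤ h₀; i.e., the Hamiltonian error of the method is O(h^{2k+1}). -/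
/-!
By the chain rule and the fundamental theorem of calculus,
`H(u(h)) - H(u(0)) = h ∫₀¹ ∇H(u(τh)) ⬝ u'(τh) dτ`. Expanding `u'` along the `P_j` turns this
into `h Σ_j a_j ⬝ (γ_j - Δ_j)`. Since `γ_j = J a_j` and `J` is skew-symmetric, `a_j ⬝ γ_j = 0`,
which leaves `-h Σ_j a_j ⬝ Δ_j`, a sum of terms of size `O(h^j ⬝ h^(2k-j)) = O(h^(2k))`.
-/

open MeasureTheory Matrix Finset

theorem Matrix.dotProduct_mulVec_self_eq_zero {ι R : Type*} [Fintype ι] [CommRing R]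
    [IsAddTorsionFree R] {J : Matrix ι ι R} (hJ : Jᵀ = -J) (v : ι → R) :
    v ⬝ᵥ J *ᵥ v = 0 := by
  refine self_eq_neg.1 ?_
  calc v ⬝ᵥ J *ᵥ v = Jᵀ *ᵥ v ⬝ᵥ v := by rw [dotProduct_mulVec, mulVec_transpose]
    _ = -(v ⬝ᵥ J *ᵥ v) := by rw [hJ, neg_mulVec, neg_dotProduct, dotProduct_comm]

theorem Matrix.abs_dotProduct_le {ι : Type*} [Fintype ι] (v w : ι → ℝ) :
    |v ⬝ᵥ w| ≤ Fintype.card ι * (‖v‖ * ‖w‖) := by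
  calc |v ⬝ᵥ w| ≤ ∑ i, |v i * w i| := abs_sum_le_sum_abs _ _
    _ ≤ ∑ _i : ι, ‖v‖ * ‖w‖ := by
        gcongr with i
        rw [abs_mul]
        exact mul_le_mul (norm_le_pi_norm v i) (norm_le_pi_norm w i) (abs_nonneg _)
          (norm_nonneg _)
    _ = Fintype.card ι * (‖v‖ * ‖w‖) := by rw [sum_const, card_univ, nsmul_eq_mul]

theorem ContDiff.continuous_of_fderiv_apply_eq_sum {ι : Type*} [Fintype ι]
    {H : (ι → ℝ) → ℝ} (hH : ContDiff ℝ 1 H) {gradH : (ι → ℝ) → ι → ℝ}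
    (hgrad : ∀ y w, fderiv ℝ H y w = ∑ i, gradH y i * w i) : Continuous gradH := by
  classical
  refine continuous_pi fun i => ?_
  have hcoord : (fun y => gradH y i) = fun y => fderiv ℝ H y (Pi.single i 1) := by
    ext y
    simp [hgrad, Pi.single_apply]
  rw [hcoord]
  exact (hH.continuous_fderiv one_ne_zero).clm_apply continuous_const

section FiniteDimensional

variable {E F : Type*} [NormedAddCommGroup E] [NormedSpace ℝ E] [FiniteDimensional ℝ E]
  [NormedAddCommGroup F] [NormedSpace ℝ F] (L : E →ₗ[ℝ] F) {f : ℝ → E} {a b : ℝ}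

theorem LinearMap.intervalIntegrable_comp (hf : IntervalIntegrable f volume a b) :
    IntervalIntegrable (fun τ => L (f τ)) volume a b :=
  ⟨(LinearMap.toContinuousLinearMap L).integrable_comp hf.1,
    (LinearMap.toContinuousLinearMap L).integrable_comp hf.2⟩

theorem LinearMap.intervalIntegral_comp_comm [CompleteSpace F]
    (hf : IntervalIntegrable f volume a b) :
    ∫ τ in a..b, L (f τ) = L (∫ τ in a..b, f τ) :=
  haveI := FiniteDimensional.complete ℝ E
  (LinearMap.toContinuousLinearMap L).intervalIntegral_comp_comm hf

end FiniteDimensional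

theorem intervalIntegral.integral_dotProduct_sum_smul {ι : Type*} [Fintype ι]
    {g : ℝ → ι → ℝ} {p : ℕ → ℝ → ℝ} {c : ℕ → ι → ℝ} {s : Finset ℕ} {a b : ℝ}
    (hint : ∀ j ∈ s, IntervalIntegrable (fun τ => p j τ • g τ) volume a b) :
    ∫ τ in a..b, g τ ⬝ᵥ ∑ j ∈ s, p j τ • c j
      = ∑ j ∈ s, (∫ τ in a..b, p j τ • g τ) ⬝ᵥ c j := by
  let L : ℕ → (ι → ℝ) →ₗ[ℝ] ℝ := fun j => (dotProductBilin ℝ ℝ).flip (c j)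
  have hexpand : ∀ τ, g τ ⬝ᵥ ∑ j ∈ s, p j τ • c j = ∑ j ∈ s, L j (p j τ • g τ) := by
    intro τ
    simp [L, dotProduct_sum, dotProduct_smul]
  simp_rw [hexpand]
  rw [intervalIntegral.integral_finsetSum fun j hj => (L j).intervalIntegrable_comp (hint j hj)]
  exact sum_congr rfl fun j hj => (L j).intervalIntegral_comp_comm (hint j hj)

theorem sub_eq_integral_grad_dotProduct {ι : Type*} [Fintype ι] {H : (ι → ℝ) → ℝ}
    (hH : Differentiable ℝ H) {gradH : (ι → ℝ) → ι → ℝ} (hgradc : Continuous gradH)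
    (hgrad : ∀ y w, fderiv ℝ H y w = ∑ i, gradH y i * w i) {v v' : ℝ → ι → ℝ} {a b : ℝ}
    (hab : a ≤ b) (hv : ∀ τ ∈ Set.Icc a b, HasDerivAt v (v' τ) τ)
    (hv' : ContinuousOn v' (Set.Icc a b)) :
    H (v b) - H (v a) = ∫ τ in a..b, gradH (v τ) ⬝ᵥ v' τ := by
  have hderiv : ∀ τ ∈ Set.uIcc a b, HasDerivAt (fun τ => H (v τ)) (gradH (v τ) ⬝ᵥ v' τ) τ := by
    intro τ hτ
    rw [Set.uIcc_of_le hab] at hτ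
    exact ((hH (v τ)).hasFDerivAt.comp_hasDerivAt τ (hv τ hτ)).congr_deriv (hgrad _ _)
  have hvc : ContinuousOn v (Set.Icc a b) := fun τ hτ => (hv τ hτ).continuousAt.continuousWithinAt
  refine (intervalIntegral.integral_eq_sub_of_hasDerivAt hderiv ?_).symm
  refine ContinuousOn.intervalIntegrable_of_Icc hab ?_
  exact continuousOn_finsetSum _ fun i _ =>
    ((continuous_apply i).comp_continuousOn (hgradc.comp_continuousOn hvc)).mul
      ((continuous_apply i).comp_continuousOn hv')

theorem sub_eq_neg_mul_sum_dotProduct {ι : Type*} [Fintype ι] {H : (ι → ℝ) → ℝ}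
    (hH : Differentiable ℝ H) {gradH : (ι → ℝ) → ι → ℝ} (hgradc : Continuous gradH)
    (hgrad : ∀ y w, fderiv ℝ H y w = ∑ i, gradH y i * w i) {J : Matrix ι ι ℝ}
    (hJ : Jᵀ = -J) {p : ℕ → ℝ → ℝ} (hp : ∀ j, Continuous (p j)) {s : ℕ}
    {u : ℝ → ι → ℝ} {h : ℝ} {Δ γ a : ℕ → ι → ℝ}
    (hγ : ∀ j, γ j = ∫ τ in (0:ℝ)..1, p j τ • J *ᵥ gradH (u (τ * h)))
    (ha : ∀ j, a j = ∫ τ in (0:ℝ)..1, p j τ • gradH (u (τ * h)))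
    (hu : ∀ c ∈ Set.Icc (0:ℝ) 1,
      HasDerivAt u (∑ j ∈ range s, p j c • (γ j - Δ j)) (c * h)) :
    H (u h) - H (u 0) = -(h * ∑ j ∈ range s, a j ⬝ᵥ Δ j) := by
  set v : ℝ → ι → ℝ := fun τ => u (τ * h)
  set v' : ℝ → ι → ℝ := fun τ => ∑ j ∈ range s, p j τ • (γ j - Δ j)
  have hv : ∀ τ ∈ Set.Icc (0:ℝ) 1, HasDerivAt v (h • v' τ) τ := fun τ hτ =>
    (hu τ hτ).scomp τ (hasDerivAt_mul_const h)
  have hvc : ContinuousOn v (Set.Icc 0 1) := fun τ hτ =>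
    (hv τ hτ).continuousAt.continuousWithinAt
  have hint : ∀ j, IntervalIntegrable (fun τ => p j τ • gradH (v τ)) volume 0 1 := fun j =>
    ((hp j).continuousOn.smul (hgradc.comp_continuousOn hvc)).intervalIntegrable_of_Icc
      zero_le_one
  have hγa : ∀ j, γ j = J *ᵥ a j := by
    intro j
    simp_rw [hγ, ha, ← mulVec_smul, ← mulVecLin_apply]
    exact J.mulVecLin.intervalIntegral_comp_comm (hint j)
  have hv'c : ContinuousOn (fun τ => h • v' τ) (Set.Icc 0 1) := by fun_prop
  calc H (u h) - H (u 0) = H (v 1) - H (v 0) := by simp [v]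
    _ = ∫ τ in (0:ℝ)..1, gradH (v τ) ⬝ᵥ h • v' τ :=
        sub_eq_integral_grad_dotProduct hH hgradc hgrad zero_le_one hv hv'c
    _ = h * ∑ j ∈ range s, a j ⬝ᵥ (γ j - Δ j) := by
        simp_rw [dotProduct_smul, smul_eq_mul, intervalIntegral.integral_const_mul, v',
          intervalIntegral.integral_dotProduct_sum_smul fun j _ => hint j, v, ha]
    _ = -(h * ∑ j ∈ range s, a j ⬝ᵥ Δ j) := by
        simp [hγa, dotProduct_sub, J.dotProduct_mulVec_self_eq_zero hJ]

theorem stmt_7_general (n s k : ℕ) (hn : 1 ≤ n) (hs : 1 ≤ s) (hsk : s ≤ k)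
    (H : (Fin n → ℝ) → ℝ) (hH : ContDiff ℝ 1 H)
    (gradH : (Fin n → ℝ) → Fin n → ℝ)
    (hgrad : ∀ y w, fderiv ℝ H y w = ∑ i, gradH y i * w i)
    (J : Matrix (Fin n) (Fin n) ℝ) (hJ : J.transpose = -J)
    (P : ℕ → Polynomial ℝ)
    (h₀ : ℝ)
    (u : ℝ → ℝ → Fin n → ℝ)
    (Δ γ a : ℝ → ℕ → Fin n → ℝ)
    (hγ : ∀ h : ℝ, 0 < h → h ≤ h₀ → ∀ j,
      γ h j = ∫ τ in (0:ℝ)..1, (P j).eval τ • J.mulVec (gradH (u h (τ * h))))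
    (ha : ∀ h : ℝ, 0 < h → h ≤ h₀ → ∀ j,
      a h j = ∫ τ in (0:ℝ)..1, (P j).eval τ • gradH (u h (τ * h)))
    (hu' : ∀ h : ℝ, 0 < h → h ≤ h₀ → ∀ c ∈ Set.Icc (0:ℝ) 1,
      HasDerivAt (u h) (∑ j ∈ Finset.range s, (P j).eval c • (γ h j - Δ h j)) (c * h))
    (C₁ C₂ : ℝ) (hC₁ : 0 < C₁) (hC₂ : 0 < C₂)
    (hbnda : ∀ h : ℝ, 0 < h → h ≤ h₀ → ∀ j < s, ‖a h j‖ ≤ C₁ * h ^ j)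
    (hbndΔ : ∀ h : ℝ, 0 < h → h ≤ h₀ → ∀ j < s, ‖Δ h j‖ ≤ C₂ * h ^ (2*k - j)) :
    ∃ C > 0, ∀ h : ℝ, 0 < h → h ≤ h₀ →
      |H (u h h) - H (u h 0)| ≤ C * h ^ (2*k + 1) := by
  have hn' : (0 : ℝ) < n := by exact_mod_cast hn
  have hs' : (0 : ℝ) < s := by exact_mod_cast hs
  refine ⟨n * s * C₁ * C₂, by positivity, fun h hh hhh => ?_⟩
  have hterm : ∀ j ∈ range s, |a h j ⬝ᵥ Δ h j| ≤ n * (C₁ * C₂ * h ^ (2 * k)) := by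
    intro j hj
    have hj : j < s := mem_range.1 hj
    calc |a h j ⬝ᵥ Δ h j| ≤ n * (‖a h j‖ * ‖Δ h j‖) := by
          simpa using abs_dotProduct_le (a h j) (Δ h j)
      _ ≤ n * (C₁ * h ^ j * (C₂ * h ^ (2 * k - j))) := by
          gcongr
          exacts [hbnda h hh hhh j hj, hbndΔ h hh hhh j hj]
      _ = n * (C₁ * C₂ * h ^ (2 * k)) := by
          rw [mul_mul_mul_comm, ← pow_add, Nat.add_sub_cancel' (by omega : j ≤ 2 * k)]
  rw [sub_eq_neg_mul_sum_dotProduct (hH.differentiable one_ne_zero)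
      (hH.continuous_of_fderiv_apply_eq_sum hgrad) hgrad hJ (fun j => (P j).continuous)
      (hγ h hh hhh) (ha h hh hhh) (hu' h hh hhh), abs_neg, abs_mul, abs_of_pos hh]
  calc h * |∑ j ∈ range s, a h j ⬝ᵥ Δ h j|
      ≤ h * ∑ j ∈ range s, |a h j ⬝ᵥ Δ h j| := by gcongr; exact abs_sum_le_sum_abs _ _
    _ ≤ h * ∑ _j ∈ range s, n * (C₁ * C₂ * h ^ (2 * k)) := by gcongr with j hj; exact hterm j hj
    _ = n * s * C₁ * C₂ * h ^ (2 * k + 1) := by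
        rw [sum_const, card_range, nsmul_eq_mul, pow_succ]
        ring

/-- under the HBVM Hamiltonian-error setting, if `‖a_j(h)‖ ≤ C₁ h^j` and
`‖Δ_j(h)‖ ≤ C₂ h^{2k−j}` for `0 < h ≤ h₀` and `j = 0,…,s−1` (with `k ≥ s`), then the
Hamiltonian error satisfies `|H(u(h)) − H(u(0))| ≤ C h^{2k+1}` for some `C > 0`. -/
theorem stmt_7 (n s k : ℕ) (hn : 1 ≤ n) (hs : 1 ≤ s) (hsk : s ≤ k)
    (H : (Fin n → ℝ) → ℝ) (hH : ContDiff ℝ 1 H)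
    (gradH : (Fin n → ℝ) → Fin n → ℝ)
    (hgrad : ∀ y w, fderiv ℝ H y w = ∑ i, gradH y i * w i)
    (J : Matrix (Fin n) (Fin n) ℝ) (hJ : J.transpose = -J)
    (P : ℕ → Polynomial ℝ)
    (hdeg : ∀ j, (P j).degree = j)
    (horth : ∀ i j, (∫ x in (0:ℝ)..1, (P i).eval x * (P j).eval x)
      = if i = j then 1 else 0)
    (h₀ : ℝ) (hh₀ : 0 < h₀)
    (u : ℝ → ℝ → Fin n → ℝ)
    (Δ γ a : ℝ → ℕ → Fin n → ℝ)
    (hupoly : ∀ h : ℝ, 0 < h → h ≤ h₀ →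
      ∀ i, ∃ Q : Polynomial ℝ, Q.natDegree ≤ s ∧ ∀ t, u h t i = Q.eval t)
    (hγ : ∀ h : ℝ, 0 < h → h ≤ h₀ → ∀ j,
      γ h j = ∫ τ in (0:ℝ)..1, (P j).eval τ • J.mulVec (gradH (u h (τ * h))))
    (ha : ∀ h : ℝ, 0 < h → h ≤ h₀ → ∀ j,
      a h j = ∫ τ in (0:ℝ)..1, (P j).eval τ • gradH (u h (τ * h)))
    (hu' : ∀ h : ℝ, 0 < h → h ≤ h₀ → ∀ c ∈ Set.Icc (0:ℝ) 1,
      HasDerivAt (u h) (∑ j ∈ Finset.range s, (P j).eval c • (γ h j - Δ h j)) (c * h))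
    (C₁ C₂ : ℝ) (hC₁ : 0 < C₁) (hC₂ : 0 < C₂)
    (hbnda : ∀ h : ℝ, 0 < h → h ≤ h₀ → ∀ j < s, ‖a h j‖ ≤ C₁ * h ^ j)
    (hbndΔ : ∀ h : ℝ, 0 < h → h ≤ h₀ → ∀ j < s, ‖Δ h j‖ ≤ C₂ * h ^ (2*k - j)) :
    ∃ C > 0, ∀ h : ℝ, 0 < h → h ≤ h₀ →
      |H (u h h) - H (u h 0)| ≤ C * h ^ (2*k + 1) :=
  stmt_7_general n s k hn hs hsk H hH gradH hgrad J hJ P h₀ u Δ γ a hγ ha hu' C₁ C₂ hC₁ hC₂ hbnda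
    hbndΔ
end

section
/- Let s ≤ k, let c_1, …, c_k ∈ [0,1] be distinct nodes with weights b_1, …, b_k, and let {P_j}_{j=0}^{s−1} be the shifted Legendre polynomials on [0,1]. Define the k×s matrices P = (P_{j−1}(c_i)) and I = (∫₀^{c_i} P_{j−1}(x) dx) and Ω = diag(b_1, …, b_k). Let g : ℝ^n → ℝ^n be any vector field, y₀ ∈ ℝ^n, h > 0, and let u be a polynomial of degree at most s with u(0) = y₀ and u'(ch) = Σ_{j=0}^{s−1} γ̂_j P_j(c) for c ∈ [0,1], where γ̂_j = Σ_{i=1}^k b_i P_j(c_i) g(u(c_i h)). Then the stage values Y_i := u(c_i h) satisfy the Runge–Kutta stage equations Y_i = y₀ + h Σ_{ℓ=1}^k (I Pᵀ Ω)_{iℓ} g(Y_ℓ) for i = 1, …, k; i.e., the HBVM(k,s) method is the k-stage Runge–Kutta method with coefficient matrix A = I Pᵀ Ω. -/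
/-! Integrating `u'(xh) = Σ_j P_j(x) γ̂_j` over `[0, cᵢ]` gives
`u(cᵢh) = y₀ + h Σ_j (∫₀^{cᵢ} P_j) γ̂_j`; expanding `γ̂_j` and exchanging the two sums
produces exactly the entries of `A = I Pᵀ Ω`. -/

open Finset intervalIntegral

section

variable {E : Type*} [NormedAddCommGroup E] [NormedSpace ℝ E] [CompleteSpace E]

theorem eq_add_smul_integral_of_hasDerivAt_comp_mul {u f : ℝ → E} {h c : ℝ}
    (hc : 0 ≤ c) (hu : ∀ x ∈ Set.Icc 0 c, HasDerivAt u (f x) (x * h))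
    (hf : IntervalIntegrable f MeasureTheory.volume 0 c) :
    u (c * h) = u 0 + h • ∫ x in 0..c, f x := by
  have hderiv : ∀ x ∈ Set.uIcc 0 c, HasDerivAt (fun x => u (x * h)) (h • f x) x := by
    intro x hx
    rw [Set.uIcc_of_le hc] at hx
    exact (hu x hx).scomp x (by simpa using (hasDerivAt_id x).mul_const h)
  have := integral_eq_sub_of_hasDerivAt hderiv (hf.smul h)
  rw [intervalIntegral.integral_smul, zero_mul] at this
  rw [this, add_sub_cancel]

theorem integral_sum_eval_smul {ι : Type*} (S : Finset ι) (p : ι → Polynomial ℝ) (γ : ι → E)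
    (a b : ℝ) :
    ∫ x in a..b, ∑ j ∈ S, (p j).eval x • γ j = ∑ j ∈ S, (∫ x in a..b, (p j).eval x) • γ j := by
  rw [integral_finsetSum]
  · exact Finset.sum_congr rfl fun j _ => intervalIntegral.integral_smul_const _ _
  · exact fun j _ => ((Polynomial.continuous _).smul continuous_const).intervalIntegrable _ _

end

theorem stmt_8_general (n s k : ℕ)
    (c : Fin k → ℝ) (hc : ∀ i, c i ∈ Set.Icc (0:ℝ) 1)
    (b : Fin k → ℝ)
    (P : ℕ → Polynomial ℝ)
    (g : (Fin n → ℝ) → Fin n → ℝ) (y₀ : Fin n → ℝ) (h : ℝ)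
    (u : ℝ → Fin n → ℝ)
    (hu0 : u 0 = y₀)
    (γ : ℕ → Fin n → ℝ)
    (hγ : ∀ j, γ j = ∑ i, (b i * (P j).eval (c i)) • g (u (c i * h)))
    (hu' : ∀ x ∈ Set.Icc (0:ℝ) 1,
      HasDerivAt u (∑ j ∈ Finset.range s, (P j).eval x • γ j) (x * h))
    (A : Matrix (Fin k) (Fin k) ℝ)
    (hA : ∀ i l, A i l = ∑ j ∈ Finset.range s,
      (∫ x in (0:ℝ)..(c i), (P j).eval x) * (P j).eval (c l) * b l) :
    ∀ i, u (c i * h) = y₀ + h • ∑ l, A i l • g (u (c l * h)) := by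
  intro i
  have hcont : Continuous fun x => ∑ j ∈ range s, (P j).eval x • γ j :=
    continuous_finsetSum _ fun j _ => (Polynomial.continuous _).smul continuous_const
  rw [eq_add_smul_integral_of_hasDerivAt_comp_mul (hc i).1
    (fun x hx => hu' x ⟨hx.1, hx.2.trans (hc i).2⟩) (hcont.intervalIntegrable _ _),
    hu0, integral_sum_eval_smul]
  congr 2
  simp only [hγ, hA, Finset.smul_sum, Finset.sum_smul, smul_smul]
  rw [sum_comm]
  exact Finset.sum_congr rfl fun l _ => Finset.sum_congr rfl fun j _ => by ring_nf

/-- the HBVM(k,s) polynomial `u`, defined by `u(0) = y₀` and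
`u'(ch) = Σ_{j<s} γ̂_j P_j(c)` with `γ̂_j = Σᵢ bᵢ P_j(cᵢ) g(u(cᵢh))`, has stage values
`Yᵢ = u(cᵢ h)` satisfying the Runge–Kutta stage equations with coefficient matrix
`A = I Pᵀ Ω`, i.e. `Aᵢₗ = Σ_{j<s} (∫₀^{cᵢ} P_j) P_j(c_ℓ) b_ℓ`. -/
theorem stmt_8 (n s k : ℕ) (hn : 1 ≤ n) (hs : 1 ≤ s) (hsk : s ≤ k)
    (c : Fin k → ℝ) (hc : ∀ i, c i ∈ Set.Icc (0:ℝ) 1) (hcinj : Function.Injective c)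
    (b : Fin k → ℝ)
    (P : ℕ → Polynomial ℝ)
    (hdeg : ∀ j, (P j).degree = j)
    (horth : ∀ i j, (∫ x in (0:ℝ)..1, (P i).eval x * (P j).eval x)
      = if i = j then 1 else 0)
    (g : (Fin n → ℝ) → Fin n → ℝ) (y₀ : Fin n → ℝ) (h : ℝ) (hh : 0 < h)
    (u : ℝ → Fin n → ℝ)
    (hupoly : ∀ i, ∃ Q : Polynomial ℝ, Q.natDegree ≤ s ∧ ∀ t, u t i = Q.eval t)
    (hu0 : u 0 = y₀)
    (γ : ℕ → Fin n → ℝ)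
    (hγ : ∀ j, γ j = ∑ i, (b i * (P j).eval (c i)) • g (u (c i * h)))
    (hu' : ∀ x ∈ Set.Icc (0:ℝ) 1,
      HasDerivAt u (∑ j ∈ Finset.range s, (P j).eval x • γ j) (x * h))
    (A : Matrix (Fin k) (Fin k) ℝ)
    (hA : ∀ i l, A i l = ∑ j ∈ Finset.range s,
      (∫ x in (0:ℝ)..(c i), (P j).eval x) * (P j).eval (c l) * b l) :
    ∀ i, u (c i * h) = y₀ + h • ∑ l, A i l • g (u (c l * h)) :=
  stmt_8_general n s k c hc b P g y₀ h u hu0 γ hγ hu' A hA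
end

section
/- Let N ≥ 2, Δx > 0, let f : ℝ → ℝ be continuously differentiable, let φ₀, φ₁ : ℝ → ℝ be continuously differentiable, let T_N ∈ ℝ^{N×N} be the symmetric tridiagonal matrix with 2's on the diagonal and −1's on the sub- and super-diagonals, and let φ(t) = (φ₀(t), 0, …, 0, φ₁(t))ᵀ ∈ ℝ^N. Define H(q,p,t) = Δx [ ½ pᵀp + qᵀT_N q/(2Δx²) + Σ_{i=1}^N f(q_i) ] + φ(t)ᵀφ(t)/(2Δx) − qᵀφ(t)/Δx. If q, p : [0,∞) → ℝ^N solve q' = p, p' = −(1/Δx²) T_N q + (1/Δx²) φ(t) − f'(q), then for all t > 0, (d/dt) H(q(t),p(t),t) = [(φ₀(t) − q₁(t)) φ₀'(t) + (φ₁(t) − q_N(t)) φ₁'(t)] / Δx. -/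
/-!
Since the semi-discrete system is Hamiltonian, the time derivative of `H` along a solution is
its explicit time derivative: the terms `p ⬝ᵥ p'` cancel against the derivatives of the potential
parts (symmetry of `T_N` gives `d/dt (q ⬝ᵥ T_N q) = 2 p ⬝ᵥ T_N q`), leaving `(φ - q) ⬝ᵥ φ' / Δx`.
As `φ'` is supported on the two boundary nodes, this is the claimed expression.
-/

open Matrix

section

variable {ι : Type*} [Fintype ι] {u v : ℝ → ι → ℝ} {u' v' : ι → ℝ} {t : ℝ}

theorem HasDerivAt.dotProduct (hu : HasDerivAt u u' t) (hv : HasDerivAt v v' t) :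
    HasDerivAt (fun τ => u τ ⬝ᵥ v τ) (u' ⬝ᵥ v t + u t ⬝ᵥ v') t := by
  simpa only [_root_.dotProduct, Finset.sum_add_distrib] using
    HasDerivAt.fun_sum (u := Finset.univ) fun i _ =>
      (hasDerivAt_pi.mp hu i).fun_mul (hasDerivAt_pi.mp hv i)

theorem HasDerivAt.sum_sq (hu : HasDerivAt u u' t) :
    HasDerivAt (fun τ => ∑ i, u τ i ^ 2) (2 * (u t ⬝ᵥ u')) t := by
  have := hu.dotProduct hu
  rw [dotProduct_comm u', ← two_mul] at this
  simpa only [_root_.dotProduct, sq] using this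

theorem HasDerivAt.mulVec (A : Matrix ι ι ℝ) (hu : HasDerivAt u u' t) :
    HasDerivAt (fun τ => A *ᵥ u τ) (A *ᵥ u') t :=
  (LinearMap.toContinuousLinearMap (Matrix.mulVecLin A)).hasFDerivAt.comp_hasDerivAt t hu

theorem HasDerivAt.dotProduct_mulVec_self {A : Matrix ι ι ℝ} (hA : A.IsSymm)
    (hu : HasDerivAt u u' t) :
    HasDerivAt (fun τ => u τ ⬝ᵥ A *ᵥ u τ) (2 * (u' ⬝ᵥ A *ᵥ u t)) t := by
  convert hu.dotProduct (hu.mulVec A) using 1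
  rw [← hA.eq, dotProduct_transpose_mulVec, hA.eq]
  ring

theorem hasDerivAt_sum_comp {F : ℝ → ℝ} (hF : Differentiable ℝ F) (hu : HasDerivAt u u' t) :
    HasDerivAt (fun τ => ∑ i, F (u τ i)) ((fun i => deriv F (u t i)) ⬝ᵥ u') t :=
  HasDerivAt.fun_sum fun i _ => (hF (u t i)).hasDerivAt.comp t (hasDerivAt_pi.mp hu i)

noncomputable def semidiscreteHamiltonian (T : Matrix ι ι ℝ) (F : ℝ → ℝ) (h : ℝ)
    (φ q p : ι → ℝ) : ℝ :=
  h * ((1/2) * ∑ i, (p i)^2 + q ⬝ᵥ T *ᵥ q / (2 * h^2) + ∑ i, F (q i))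
    + φ ⬝ᵥ φ / (2 * h) - q ⬝ᵥ φ / h

theorem hasDerivAt_semidiscreteHamiltonian {T : Matrix ι ι ℝ} (hT : T.IsSymm) {F : ℝ → ℝ}
    (hF : Differentiable ℝ F) {h : ℝ} (hh : h ≠ 0) {φ q p : ℝ → ι → ℝ} {φ' : ι → ℝ}
    (hφ : HasDerivAt φ φ' t) (hq : HasDerivAt q (p t) t)
    (hp : HasDerivAt p (-(1/h^2) • T *ᵥ q t + (1/h^2) • φ t - fun i => deriv F (q t i)) t) :
    HasDerivAt (fun τ => semidiscreteHamiltonian T F h (φ τ) (q τ) (p τ))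
      ((φ t - q t) ⬝ᵥ φ' / h) t := by
  unfold semidiscreteHamiltonian
  refine (((((hp.sum_sq.const_mul (1/2)).fun_add
    ((hq.dotProduct_mulVec_self hT).div_const (2 * h^2))).fun_add
    (hasDerivAt_sum_comp hF hq)).const_mul h).fun_add ((hφ.dotProduct hφ).div_const (2 * h))
    |>.fun_sub ((hq.dotProduct hφ).div_const h)).congr_deriv ?_
  simp only [dotProduct_add, dotProduct_sub, dotProduct_smul, sub_dotProduct, smul_eq_mul]
  rw [dotProduct_comm φ', dotProduct_comm (fun i => deriv F (q t i))]
  field_simp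
  ring

end

theorem isSymm_tridiag {N : ℕ} (T : Matrix (Fin N) (Fin N) ℝ) (hT : ∀ i j : Fin N, T i j =
      if i = j then 2 else if i.val + 1 = j.val ∨ j.val + 1 = i.val then -1 else 0) :
    T.IsSymm :=
  IsSymm.ext fun i j => by simp only [hT, eq_comm, or_comm]

/-- for the Dirichlet finite-difference semi-discretization
`q' = p`, `p' = −(1/Δx²) T_N q + (1/Δx²) φ(t) − f'(q)` with
`T_N = tridiag(−1,2,−1)` and `φ(t) = (φ₀(t),0,…,0,φ₁(t))ᵀ`, the non-autonomous Hamiltonian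
`H(q,p,t) = Δx[½pᵀp + qᵀT_Nq/(2Δx²) + Σᵢ f(qᵢ)] + φᵀφ/(2Δx) − qᵀφ/Δx` satisfies
`(d/dt)H(q(t),p(t),t) = [(φ₀(t)−q₁(t))φ₀'(t) + (φ₁(t)−q_N(t))φ₁'(t)]/Δx` for `t > 0`. -/
theorem stmt_12 (N : ℕ) (hN : 2 ≤ N) (Δx : ℝ) (hΔx : 0 < Δx)
    (f : ℝ → ℝ) (hf : ContDiff ℝ 1 f)
    (φ₀ φ₁ : ℝ → ℝ) (hφ₀ : ContDiff ℝ 1 φ₀) (hφ₁ : ContDiff ℝ 1 φ₁)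
    (T : Matrix (Fin N) (Fin N) ℝ)
    (hT : ∀ i j : Fin N, T i j =
      if i = j then 2 else if i.val + 1 = j.val ∨ j.val + 1 = i.val then -1 else 0)
    (φv : ℝ → Fin N → ℝ)
    (hφv : ∀ t (i : Fin N), φv t i =
      if i.val = 0 then φ₀ t else if i.val = N - 1 then φ₁ t else 0)
    (H : (Fin N → ℝ) → (Fin N → ℝ) → ℝ → ℝ)
    (hH : ∀ qv pv t, H qv pv t
      = Δx * ((1/2) * ∑ i, (pv i)^2
          + dotProduct qv (T.mulVec qv) / (2 * Δx^2) + ∑ i, f (qv i))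
        + dotProduct (φv t) (φv t) / (2 * Δx)
        - dotProduct qv (φv t) / Δx)
    (q p : ℝ → Fin N → ℝ)
    (hq : ∀ t ∈ Set.Ici (0:ℝ), HasDerivAt q (p t) t)
    (hp : ∀ t ∈ Set.Ici (0:ℝ), HasDerivAt p
      (fun i => -(1/Δx^2) * T.mulVec (q t) i + (1/Δx^2) * φv t i - deriv f (q t i)) t) :
    ∀ t > (0:ℝ),
      deriv (fun τ => H (q τ) (p τ) τ) t
        = ((φ₀ t - q t ⟨0, by omega⟩) * deriv φ₀ t
            + (φ₁ t - q t ⟨N - 1, by omega⟩) * deriv φ₁ t) / Δx := by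
  intro t ht
  set i₀ : Fin N := ⟨0, by omega⟩
  set i₁ : Fin N := ⟨N - 1, by omega⟩
  have hi : i₀ ≠ i₁ := by simp only [ne_eq, Fin.ext_iff, i₀, i₁]; omega
  have hφv_eq : φv = fun τ => φ₀ τ • Pi.single i₀ 1 + φ₁ τ • Pi.single i₁ 1 := by
    ext τ i
    rw [hφv]
    simp only [Pi.add_apply, Pi.smul_apply, Pi.single_apply, Fin.ext_iff, smul_eq_mul, i₀, i₁]
    split_ifs <;> first | omega | ring
  have hφ : HasDerivAt φv (deriv φ₀ t • Pi.single i₀ 1 + deriv φ₁ t • Pi.single i₁ 1) t :=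
    hφv_eq ▸ (((hφ₀.differentiable one_ne_zero t).hasDerivAt.smul_const _).add
      ((hφ₁.differentiable one_ne_zero t).hasDerivAt.smul_const _))
  have hH_eq : (fun τ => H (q τ) (p τ) τ)
      = fun τ => semidiscreteHamiltonian T f Δx (φv τ) (q τ) (p τ) :=
    funext fun τ => hH _ _ _
  rw [hH_eq, (hasDerivAt_semidiscreteHamiltonian (isSymm_tridiag T hT)
    (hf.differentiable one_ne_zero) hΔx.ne' hφ (hq t ht.le) (hp t ht.le)).deriv]
  simp only [hφv_eq, dotProduct_add, dotProduct_smul, dotProduct_single, Pi.sub_apply,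
    Pi.add_apply, Pi.smul_apply, Pi.single_eq_same, Pi.single_eq_of_ne hi,
    Pi.single_eq_of_ne hi.symm, smul_eq_mul, mul_one, mul_zero, add_zero, zero_add]
  ring
end

section
/- Let r ≥ 1 be an integer and let g : ℝ → ℝ be a 1-periodic function of class C^r. Then the composite trapezoidal rule error on the uniform mesh x_i = i/m satisfies R(m) := ∫₀¹ g(x) dx − (1/m) Σ_{i=0}^{m−1} g(x_i) = O(m^{−r}); that is, there is a constant C > 0 (depending on g and r) such that |R(m)| ≤ C m^{−r} for all m ≥ 1. -/
/-!
Aliasing of the Fourier series: `∑_{i<m} exp (2πi n i / m)` is `m` when `m ∣ n` and `0`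
otherwise, so for summable Fourier coefficients `ĝ` the rectangle sum `(1/m) ∑_{i<m} g(i/m)`
equals `∑_k ĝ(k m)`, and the quadrature error is `-∑_{k ≠ 0} ĝ(k m)`. Integrating by parts `r` times
gives `|ĝ(n)| ≤ M / |n|^r` with `M = sup |g⁽ʳ⁾|`, hence `|R(m)| ≤ M (∑_{k ≠ 0} |k|^{-r}) / m^r`,
a convergent series once `r ≥ 2`. For `r = 1` the coefficients need not be summable; there one
uses instead that `g` is Lipschitz, so each of the `m` cells contributes at most `K / m²`.
-/

open Set Finset Function MeasureTheory Complex
open scoped Real NNReal Interval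

section Lipschitz

variable {E : Type*} [NormedAddCommGroup E] [NormedSpace ℝ E]

noncomputable def trapezoidError (f : ℝ → E) (m : ℕ) : E :=
  (∫ x in (0:ℝ)..1, f x) - (m : ℝ)⁻¹ • ∑ i ∈ range m, f (i / m)

variable [CompleteSpace E]

theorem norm_integral_sub_smul_le_of_lipschitzOnWith {f : ℝ → E} {K : ℝ≥0} {a b : ℝ}
    (hab : a ≤ b) (hf : LipschitzOnWith K f (Icc a b)) :
    ‖(∫ x in a..b, f x) - (b - a) • f a‖ ≤ K * (b - a) ^ 2 := by
  have hint : IntervalIntegrable f volume a b := hf.continuousOn.intervalIntegrable_of_Icc hab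
  rw [← intervalIntegral.integral_const,
    ← intervalIntegral.integral_sub hint intervalIntegrable_const]
  calc _ ≤ K * (b - a) * |b - a| :=
        intervalIntegral.norm_integral_le_of_norm_le_const fun x hx => ?_
    _ = K * (b - a) ^ 2 := by rw [abs_of_nonneg (sub_nonneg.2 hab)]; ring
  rw [uIoc_of_le hab] at hx
  calc ‖f x - f a‖ ≤ K * ‖x - a‖ := hf.norm_sub_le ⟨hx.1.le, hx.2⟩ ⟨le_rfl, hab⟩
    _ ≤ K * (b - a) := by
      rw [Real.norm_of_nonneg (by linarith [hx.1])]
      gcongr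
      exact hx.2

theorem norm_trapezoidError_le_of_lipschitzOnWith {f : ℝ → E} {K : ℝ≥0}
    (hf : LipschitzOnWith K f (Icc 0 1)) {m : ℕ} (hm : m ≠ 0) :
    ‖trapezoidError f m‖ ≤ K / m := by
  have hm' : (0 : ℝ) < m := by positivity
  set x : ℕ → ℝ := fun i => i / m
  have hstep (i : ℕ) : x (i + 1) - x i = (m : ℝ)⁻¹ := by
    simp only [x]; push_cast; field_simp; ring
  have hle (i : ℕ) : x i ≤ x (i + 1) := by linarith [hstep i, inv_pos.2 hm']
  have hsub {i : ℕ} (hi : i < m) : Icc (x i) (x (i + 1)) ⊆ Icc 0 1 :=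
    Icc_subset_Icc (by positivity) (div_le_one_of_le₀ (by exact_mod_cast hi) hm'.le)
  have hsplit : trapezoidError f m =
      ∑ i ∈ range m, ((∫ y in x i..x (i + 1), f y) - (x (i + 1) - x i) • f (x i)) := by
    have h0 : x 0 = 0 := by simp [x]
    have h1 : x m = 1 := div_self hm'.ne'
    rw [sum_sub_distrib, intervalIntegral.sum_integral_adjacent_intervals fun i hi => ?_, h0, h1]
    · simp only [hstep, ← smul_sum, trapezoidError, x]
    · exact (hf.continuousOn.mono (hsub hi)).intervalIntegrable_of_Icc (hle i)
  calc ‖trapezoidError f m‖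
      ≤ ∑ i ∈ range m, ‖(∫ y in x i..x (i + 1), f y) - (x (i + 1) - x i) • f (x i)‖ := by
        rw [hsplit]; exact norm_sum_le _ _
    _ ≤ ∑ _i ∈ range m, K * (m : ℝ)⁻¹ ^ 2 := sum_le_sum fun i hi => by
        simpa only [hstep] using norm_integral_sub_smul_le_of_lipschitzOnWith (hle i)
          (hf.mono (hsub (mem_range.1 hi)))
    _ = K / m := by rw [sum_const, card_range, nsmul_eq_mul]; field_simp

end Lipschitz

theorem HasSum.norm_sub_le_of_bounded {ι E : Type*} [NormedAddCommGroup E] [DecidableEq ι]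
    {a : ι → E} {b : ι → ℝ} {s : E} {t : ℝ} (ha : HasSum a s) (hb : HasSum b t) (i₀ : ι)
    (hb₀ : 0 ≤ b i₀) (hab : ∀ i, i ≠ i₀ → ‖a i‖ ≤ b i) :
    ‖s - a i₀‖ ≤ t := by
  have hupd := ha.update i₀ 0
  rw [zero_sub, neg_add_eq_sub] at hupd
  refine hupd.norm_le_of_bounded hb fun i => ?_
  rcases eq_or_ne i i₀ with rfl | hi
  · simpa using hb₀
  · simpa [hi] using hab i hi

theorem Function.Periodic.iteratedDeriv {𝕜 F : Type*} [NontriviallyNormedField 𝕜]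
    [NormedAddCommGroup F] [NormedSpace 𝕜 F] {f : 𝕜 → F} {c : 𝕜} (hf : Periodic f c) (n : ℕ) :
    Periodic (iteratedDeriv n f) c := by
  induction n with
  | zero => simpa using hf
  | succ n ih =>
    intro x
    rw [iteratedDeriv_succ, ← deriv_comp_add_const, funext ih]

theorem Function.Periodic.fourierCoeff_lift {T : ℝ} [hT : Fact (0 < T)] {f : ℝ → ℂ}
    (hf : Periodic f T) (n : ℤ) :
    fourierCoeff (T := T) hf.lift n = fourierCoeffOn hT.out f n := by
  rw [fourierCoeffOn_eq_integral, fourierCoeff_eq_intervalIntegral _ _ 0, zero_add, sub_zero]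
  rfl

theorem norm_fourierCoeffOn_le {a b : ℝ} (hab : a < b) {f : ℝ → ℂ} {M : ℝ}
    (hf : ∀ x ∈ Icc a b, ‖f x‖ ≤ M) (n : ℤ) : ‖fourierCoeffOn hab f n‖ ≤ M := by
  rw [fourierCoeffOn_eq_integral, norm_smul]
  have hba : 0 < b - a := sub_pos.2 hab
  calc ‖1 / (b - a)‖ * ‖∫ x in a..b, fourier (-n) (x : AddCircle (b - a)) • f x‖
      ≤ ‖1 / (b - a)‖ * (M * |b - a|) := by
        gcongr
        refine intervalIntegral.norm_integral_le_of_norm_le_const fun x hx => ?_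
        rw [uIoc_of_le hab.le] at hx
        rw [norm_smul, fourier_apply, Circle.norm_coe, one_mul]
        exact hf x (Ioc_subset_Icc_self hx)
    _ = M := by rw [Real.norm_of_nonneg (by positivity), abs_of_pos hba]; field_simp

theorem fourierCoeffOn_of_hasDerivAt_of_eq {a b : ℝ} (hab : a < b) {f f' : ℝ → ℂ} {n : ℤ}
    (hn : n ≠ 0) (hf : ∀ x ∈ [[a, b]], HasDerivAt f (f' x) x)
    (hf' : IntervalIntegrable f' volume a b) (hfab : f a = f b) :
    fourierCoeffOn hab f n = (b - a) / (2 * π * I * n) * fourierCoeffOn hab f' n := by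
  rw [fourierCoeffOn_of_hasDerivAt hab hn hf hf', hfab, sub_self, mul_zero, zero_sub]
  have : (n : ℂ) ≠ 0 := by exact_mod_cast hn
  field_simp

theorem fourierCoeffOn_eq_mul_fourierCoeffOn_iteratedDeriv {f : ℝ → ℂ} {r : ℕ}
    (hf : ContDiff ℝ r f) (hper : Periodic f 1) {n : ℤ} (hn : n ≠ 0) {j : ℕ} (hj : j ≤ r) :
    fourierCoeffOn zero_lt_one f n =
      (2 * π * I * n)⁻¹ ^ j * fourierCoeffOn zero_lt_one (iteratedDeriv j f) n := by
  induction j with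
  | zero => simp
  | succ j ih =>
    have hjr : (j : WithTop ℕ∞) < r := by exact_mod_cast hj
    have hderiv (x : ℝ) : HasDerivAt (iteratedDeriv j f) (iteratedDeriv (j + 1) f x) x := by
      rw [iteratedDeriv_succ]
      exact (hf.differentiable_iteratedDeriv j hjr x).hasDerivAt
    have hcont : Continuous (iteratedDeriv (j + 1) f) :=
      hf.continuous_iteratedDeriv (j + 1) (by exact_mod_cast hj)
    rw [ih (by omega), fourierCoeffOn_of_hasDerivAt_of_eq zero_lt_one hn (fun x _ => hderiv x)
      (hcont.intervalIntegrable 0 1) (by simpa using (hper.iteratedDeriv j 0).symm)]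
    push_cast
    ring

theorem norm_fourierCoeffOn_le_of_contDiff {f : ℝ → ℂ} {r : ℕ} (hf : ContDiff ℝ r f)
    (hper : Periodic f 1) {M : ℝ} (hM : ∀ x ∈ Icc (0 : ℝ) 1, ‖iteratedDeriv r f x‖ ≤ M)
    {n : ℤ} (hn : n ≠ 0) :
    ‖fourierCoeffOn zero_lt_one f n‖ ≤ M / |(n : ℝ)| ^ r := by
  have hn' : 0 < |(n : ℝ)| := by positivity
  have hfactor : ‖(2 * π * I * n)⁻¹‖ ≤ |(n : ℝ)|⁻¹ := by
    rw [norm_inv, norm_mul, norm_mul, norm_mul, Complex.norm_ofNat, Complex.norm_real, norm_I,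
      Real.norm_of_nonneg Real.pi_pos.le, mul_one, norm_intCast]
    gcongr
    exact le_mul_of_one_le_left (abs_nonneg _) (by linarith [Real.pi_gt_three])
  rw [fourierCoeffOn_eq_mul_fourierCoeffOn_iteratedDeriv hf hper hn le_rfl, norm_mul, norm_pow,
    div_eq_mul_inv, mul_comm M, ← inv_pow]
  gcongr
  exact norm_fourierCoeffOn_le _ hM n

theorem sum_fourier_div_natCast {m : ℕ} (hm : m ≠ 0) (n : ℤ) :
    ∑ i ∈ range m, fourier n ((i / m : ℝ) : AddCircle (1 : ℝ)) =
      if (m : ℤ) ∣ n then (m : ℂ) else 0 := by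
  have hζ := Complex.isPrimitiveRoot_exp m hm
  set w := exp (2 * π * I / m) ^ n with hw
  have hterm (i : ℕ) : fourier n ((i / m : ℝ) : AddCircle (1 : ℝ)) = w ^ i := by
    rw [fourier_coe_apply, hw, ← exp_int_mul, ← exp_nat_mul]
    push_cast
    ring_nf
  simp only [hterm]
  split_ifs with hdvd
  · simp [hw, (hζ.zpow_eq_one_iff_dvd n).2 hdvd]
  · have hwm : w ^ m = 1 := by
      rw [hw, ← zpow_natCast, ← zpow_mul, mul_comm n, zpow_mul, zpow_natCast, hζ.pow_eq_one,
        one_zpow]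
    rw [geom_sum_eq ((hζ.zpow_eq_one_iff_dvd n).not.2 hdvd), hwm, sub_self, zero_div]

theorem hasSum_fourierCoeff_mul_natCast {F : C(AddCircle (1 : ℝ), ℂ)}
    (hF : Summable (fourierCoeff F)) {m : ℕ} (hm : m ≠ 0) :
    HasSum (fun k : ℤ => fourierCoeff F (k * m))
      ((m : ℂ)⁻¹ * ∑ i ∈ range m, F ((i / m : ℝ) : AddCircle (1 : ℝ))) := by
  have hmZ : (m : ℤ) ≠ 0 := by exact_mod_cast hm
  have hsum := (hasSum_sum (s := range m) fun (i : ℕ) _ =>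
    has_pointwise_sum_fourier_series_of_summable hF ((i / m : ℝ) : AddCircle (1 : ℝ))).mul_left
      (m : ℂ)⁻¹
  simp only [smul_eq_mul, ← mul_sum, sum_fourier_div_natCast hm] at hsum
  have hzero (n : ℤ) (hn : n ∉ Set.range fun k : ℤ => k * m) :
      (m : ℂ)⁻¹ * (fourierCoeff F n * if (m : ℤ) ∣ n then (m : ℂ) else 0) = 0 := by
    rw [if_neg fun ⟨k, hk⟩ => hn ⟨k, by rw [hk, mul_comm]⟩, mul_zero, mul_zero]
  convert ((mul_left_injective₀ hmZ).hasSum_iff hzero).2 hsum using 1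
  ext k
  simp only [comp_apply, dvd_mul_left, if_true]
  field_simp

theorem exists_norm_trapezoidError_le_of_contDiff {f : ℝ → ℂ} {r : ℕ} (hr : 2 ≤ r)
    (hf : ContDiff ℝ r f) (hper : Periodic f 1) :
    ∃ C, ∀ m : ℕ, m ≠ 0 → ‖trapezoidError f m‖ ≤ C / (m : ℝ) ^ r := by
  obtain ⟨M, hM⟩ := isCompact_Icc.exists_bound_of_continuousOn
    (hf.continuous_iteratedDeriv r le_rfl).continuousOn (s := Icc (0 : ℝ) 1)
  set c := fourierCoeffOn zero_lt_one f
  have hdecay {n : ℤ} (hn : n ≠ 0) : ‖c n‖ ≤ M / |(n : ℝ)| ^ r :=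
    norm_fourierCoeffOn_le_of_contDiff hf hper hM hn
  have hp : Summable fun k : ℤ => 1 / |(k : ℝ)| ^ r := by
    simpa [abs_div, abs_pow] using (Real.summable_one_div_int_pow.2 hr).abs
  have : Fact ((0 : ℝ) < 1) := ⟨zero_lt_one⟩
  let F : C(AddCircle (1 : ℝ), ℂ) := ⟨hper.lift, continuous_coinduced_dom.2 hf.continuous⟩
  have hFc : fourierCoeff F = c := funext hper.fourierCoeff_lift
  have hc : Summable c := by
    refine .of_norm_bounded_eventually (hp.mul_left M) ?_
    filter_upwards [Filter.eventually_cofinite_ne 0] with n hn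
    simpa [div_eq_mul_one_div M] using hdecay hn
  refine ⟨M * ∑' k : ℤ, 1 / |(k : ℝ)| ^ r, fun m hm => ?_⟩
  have hc0 : c 0 = ∫ x in (0 : ℝ)..1, f x := by simp [c, fourierCoeffOn_eq_integral]
  have halias := hasSum_fourierCoeff_mul_natCast (hFc ▸ hc) hm
  rw [hFc] at halias
  have hbound (k : ℤ) (hk : k ≠ 0) : ‖c (k * m)‖ ≤ M / (m : ℝ) ^ r * (1 / |(k : ℝ)| ^ r) := by
    have hkm : k * (m : ℤ) ≠ 0 := mul_ne_zero hk (by exact_mod_cast hm)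
    calc ‖c (k * m)‖ ≤ M / |((k * m : ℤ) : ℝ)| ^ r := hdecay hkm
      _ = M / (m : ℝ) ^ r * (1 / |(k : ℝ)| ^ r) := by
        push_cast
        rw [abs_mul, Nat.abs_cast, mul_pow]
        field_simp
  have herr : trapezoidError f m =
      c 0 - (m : ℂ)⁻¹ * ∑ i ∈ range m, F ((i / m : ℝ) : AddCircle (1 : ℝ)) := by
    rw [trapezoidError, hc0, Complex.real_smul]
    push_cast
    rfl
  calc ‖trapezoidError f m‖ ≤ M / (m : ℝ) ^ r * ∑' k : ℤ, 1 / |(k : ℝ)| ^ r := by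
        rw [herr, norm_sub_rev, ← zero_mul (m : ℤ)]
        -- at `k = 0` the bound is `M / m ^ r * (1 / 0) = 0`
        exact halias.norm_sub_le_of_bounded (hp.hasSum.mul_left _) 0
          (by simp [zero_pow (by omega : r ≠ 0)]) hbound
    _ = M * (∑' k : ℤ, 1 / |(k : ℝ)| ^ r) / (m : ℝ) ^ r := by ring

theorem trapezoidError_ofReal (g : ℝ → ℝ) (m : ℕ) :
    trapezoidError (fun x => (g x : ℂ)) m = trapezoidError g m := by
  simp only [trapezoidError, intervalIntegral.integral_ofReal, Complex.real_smul, smul_eq_mul]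
  push_cast
  rfl

/-- for a 1-periodic function `g` of class `C^r` (`r ≥ 1`), the composite
trapezoidal rule error satisfies
`R(m) = ∫₀¹ g(x) dx − (1/m) Σ_{i<m} g(i/m) = O(m^{−r})`: there is `C > 0` such that
`|R(m)| ≤ C m^{−r}` for all `m ≥ 1`. -/
theorem stmt_19 (r : ℕ) (hr : 1 ≤ r)
    (g : ℝ → ℝ) (hper : Function.Periodic g 1) (hg : ContDiff ℝ r g) :
    ∃ C > 0, ∀ m : ℕ, 1 ≤ m →
      |(∫ x in (0:ℝ)..1, g x) - (1/(m:ℝ)) * ∑ i ∈ Finset.range m, g ((i:ℝ)/(m:ℝ))|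
        ≤ C / (m:ℝ) ^ r := by
  suffices ∃ C, ∀ m : ℕ, m ≠ 0 → ‖trapezoidError g m‖ ≤ C / (m : ℝ) ^ r by
    obtain ⟨C, hC⟩ := this
    refine ⟨max C 1, by positivity, fun m hm => ?_⟩
    have := hC m (by omega)
    rw [trapezoidError, Real.norm_eq_abs, smul_eq_mul, ← one_div] at this
    exact this.trans (by gcongr; exact le_max_left _ _)
  rcases hr.eq_or_lt with rfl | hr
  · obtain ⟨K, hK⟩ := hg.contDiffOn.exists_lipschitzOnWith one_ne_zero (convex_Icc 0 1)
      isCompact_Icc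
    exact ⟨K, fun m hm => by simpa using norm_trapezoidError_le_of_lipschitzOnWith hK hm⟩
  · obtain ⟨C, hC⟩ := exists_norm_trapezoidError_le_of_contDiff hr
      (ofRealCLM.contDiff.comp hg) fun x => congrArg ofReal (hper x)
    refine ⟨C, fun m hm => ?_⟩
    rw [← Complex.norm_real, ← trapezoidError_ofReal]
    exact hC m hm
end
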